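/- Let p, q be unimodular complex sequences of length L. Then for every real number t, |Σ_{i=0}^{L-1} p_i · exp(2π√−1·i·t)|² ≤ 2L + 2·Σ_{τ=1}^{L-1} |ρ_p(τ) + ρ_q(τ)|. Consequently, PMEPR(p) ≤ 2 + (2/L)·Σ_{τ=1}^{L-1} |ρ_p(τ) + ρ_q(τ)|. -/

import Mathlib

/-!
For `‖z‖ = 1`, expanding `‖∑ᵢ xᵢ zⁱ‖²` and grouping the cross terms `xⱼ zʲ conj (xₖ zᵏ)` by
their lag `τ = k - j` gives `L + 2 Re ∑_{τ ≥ 1} ρₓ(τ) z̄^τ` for a unimodular `x`, since the factor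
`zʲ z̄ʲ` cancels. Adding this identity for `p` and `q`, the real part is at most
`∑_τ ‖ρ_p(τ) + ρ_q(τ)‖`, and dropping `‖∑ᵢ qᵢ zⁱ‖² ≥ 0` bounds the envelope power of `p`.
-/

open Finset

noncomputable section

/-- 1D aperiodic autocorrelation of a length-`N` complex sequence at integer shift `τ`:
`ρ_x(τ) = Σ x_j * conj (x_{j+τ})`, summed over all `j` with `j` and `j + τ` in `[0, N)`. -/
def acorr (N : ℕ) (x : ℕ → ℂ) (τ : ℤ) : ℂ :=
  ∑ j ∈ Finset.range N,
    if 0 ≤ (j : ℤ) + τ ∧ (j : ℤ) + τ < (N : ℤ) then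
      x j * star (x ((j : ℤ) + τ).toNat)
    else 0

/-- 2D aperiodic autocorrelation of an `N₁ × N₂` complex array at integer shifts `(τ₁, τ₂)`. -/
def acorr2 (N₁ N₂ : ℕ) (X : ℕ → ℕ → ℂ) (τ₁ τ₂ : ℤ) : ℂ :=
  ∑ i ∈ Finset.range N₁, ∑ j ∈ Finset.range N₂,
    if (0 ≤ (i : ℤ) + τ₁ ∧ (i : ℤ) + τ₁ < (N₁ : ℤ)) ∧
       (0 ≤ (j : ℤ) + τ₂ ∧ (j : ℤ) + τ₂ < (N₂ : ℤ)) then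
      X i j * star (X ((i : ℤ) + τ₁).toNat ((j : ℤ) + τ₂).toNat)
    else 0

/-- Peak-to-mean envelope power ratio of a length-`L` complex sequence:
`sup_{t ∈ [0,1]} (1/L) * |Σ_{i<L} c_i exp(2π√-1 i t)|²`. -/
def pmepr (L : ℕ) (c : ℕ → ℂ) : ℝ :=
  ⨆ t : Set.Icc (0 : ℝ) 1,
    ‖∑ i ∈ Finset.range L,
      c i * Complex.exp (2 * Real.pi * Complex.I * (i : ℂ) * ((t : ℝ) : ℂ))‖ ^ 2 / L


theorem acorr_natCast (N : ℕ) (x : ℕ → ℂ) (τ : ℕ) :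
    acorr N x τ = ∑ j ∈ range (N - τ), x j * star (x (j + τ)) := by
  rw [acorr, ← sum_range_add_sum_Ico _ (Nat.sub_le N τ),
    sum_eq_zero (s := Ico (N - τ) N) fun j hj => if_neg (by simp at hj; omega)]
  refine (add_zero _).trans (sum_congr rfl fun j hj => ?_)
  rw [mem_range] at hj
  rw [if_pos (by omega), show ((j : ℤ) + τ).toNat = j + τ by omega]

theorem sum_Icc_sum_range_sub_eq_sum_range_sum_range {M : Type*} [AddCommMonoid M]
    (L : ℕ) (f : ℕ → ℕ → M) :
    ∑ τ ∈ Icc 1 (L - 1), ∑ j ∈ range (L - τ), f j (j + τ) =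
      ∑ k ∈ range L, ∑ j ∈ range k, f j k := by
  rw [sum_sigma', sum_sigma']
  refine sum_bij' (fun x _ => ⟨x.2 + x.1, x.2⟩) (fun x _ => ⟨x.1 - x.2, x.2⟩)
    ?_ ?_ ?_ ?_ ?_ <;> rintro ⟨a, b⟩ h <;>
    simp only [mem_sigma, mem_Icc, mem_range, Sigma.mk.injEq, heq_eq_eq,
      and_true] at h ⊢ <;> omega

theorem sum_Icc_acorr (L : ℕ) (a : ℕ → ℂ) :
    ∑ τ ∈ Icc 1 (L - 1), acorr L a τ = ∑ k ∈ range L, ∑ j ∈ range k, a j * star (a k) := by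
  simp only [acorr_natCast]
  exact sum_Icc_sum_range_sub_eq_sum_range_sum_range L fun j k => a j * star (a k)

theorem sq_norm_sum_range_eq_add_re_sum_lt (L : ℕ) (a : ℕ → ℂ) :
    ‖∑ i ∈ range L, a i‖ ^ 2 =
      ∑ i ∈ range L, ‖a i‖ ^ 2 + 2 * (∑ k ∈ range L, ∑ j ∈ range k, a j * star (a k)).re := by
  induction L with
  | zero => simp
  | succ L ih =>
    simp only [sum_range_succ, Complex.sq_norm, Complex.normSq_add, ← sum_mul,
      Complex.star_def] at ih ⊢
    rw [ih, Complex.add_re]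
    ring

theorem sq_norm_sum_range_eq_add_sum_acorr (L : ℕ) (a : ℕ → ℂ) :
    ‖∑ i ∈ range L, a i‖ ^ 2 =
      ∑ i ∈ range L, ‖a i‖ ^ 2 + 2 * (∑ τ ∈ Icc 1 (L - 1), acorr L a τ).re := by
  rw [sq_norm_sum_range_eq_add_re_sum_lt, sum_Icc_acorr]

theorem acorr_mul_pow {z : ℂ} (hz : ‖z‖ = 1) (L : ℕ) (x : ℕ → ℂ) (τ : ℕ) :
    acorr L (fun i => x i * z ^ i) τ = acorr L x τ * star z ^ τ := by
  have hz' : z * star z = 1 := by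
    rw [Complex.star_def, Complex.mul_conj, ← Complex.sq_norm, hz]; norm_num
  simp only [acorr_natCast, sum_mul, star_mul', star_pow]
  refine sum_congr rfl fun j _ => ?_
  calc x j * z ^ j * (star (x (j + τ)) * star z ^ (j + τ))
      = x j * star (x (j + τ)) * (z * star z) ^ j * star z ^ τ := by ring
    _ = x j * star (x (j + τ)) * star z ^ τ := by rw [hz', one_pow, mul_one]

theorem sq_norm_sum_mul_pow {L : ℕ} {x : ℕ → ℂ} (hx : ∀ i < L, ‖x i‖ = 1) {z : ℂ}
    (hz : ‖z‖ = 1) :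
    ‖∑ i ∈ range L, x i * z ^ i‖ ^ 2 =
      L + 2 * (∑ τ ∈ Icc 1 (L - 1), acorr L x τ * star z ^ τ).re := by
  have hnorm : ∑ i ∈ range L, ‖x i * z ^ i‖ ^ 2 = L := by
    rw [sum_congr rfl fun i hi => by rw [norm_mul, norm_pow, hz, hx i (mem_range.1 hi)]]
    simp
  rw [sq_norm_sum_range_eq_add_sum_acorr, hnorm]
  simp only [acorr_mul_pow hz]

theorem sq_norm_sum_mul_pow_le {L : ℕ} {p q : ℕ → ℂ} (hp : ∀ i < L, ‖p i‖ = 1)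
    (hq : ∀ i < L, ‖q i‖ = 1) {z : ℂ} (hz : ‖z‖ = 1) :
    ‖∑ i ∈ range L, p i * z ^ i‖ ^ 2 ≤
      2 * L + 2 * ∑ τ ∈ Icc 1 (L - 1), ‖acorr L p τ + acorr L q τ‖ := by
  have hsum : ‖∑ i ∈ range L, p i * z ^ i‖ ^ 2 + ‖∑ i ∈ range L, q i * z ^ i‖ ^ 2 =
      2 * L + 2 * (∑ τ ∈ Icc 1 (L - 1), (acorr L p τ + acorr L q τ) * star z ^ τ).re := by
    simp only [sq_norm_sum_mul_pow hp hz, sq_norm_sum_mul_pow hq hz, add_mul, sum_add_distrib,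
      Complex.add_re]
    ring
  have hre : (∑ τ ∈ Icc 1 (L - 1), (acorr L p τ + acorr L q τ) * star z ^ τ).re ≤
      ∑ τ ∈ Icc 1 (L - 1), ‖acorr L p τ + acorr L q τ‖ := by
    refine (Complex.re_le_norm _).trans ((norm_sum_le _ _).trans (sum_le_sum fun τ _ => ?_))
    rw [norm_mul, norm_pow, norm_star, hz, one_pow, mul_one]
  nlinarith [sq_nonneg ‖∑ i ∈ range L, q i * z ^ i‖]

theorem exp_two_pi_I_mul_natCast_mul (i : ℕ) (t : ℝ) :
    Complex.exp (2 * Real.pi * Complex.I * i * t) =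
      Complex.exp (2 * Real.pi * Complex.I * t) ^ i := by
  rw [← Complex.exp_nat_mul]; ring_nf

theorem norm_exp_two_pi_I_mul (t : ℝ) : ‖Complex.exp (2 * Real.pi * Complex.I * t)‖ = 1 := by
  rw [← Complex.norm_exp_ofReal_mul_I (2 * Real.pi * t)]; push_cast; ring_nf

theorem sq_norm_sum_mul_exp_le {L : ℕ} {p q : ℕ → ℂ} (hp : ∀ i < L, ‖p i‖ = 1)
    (hq : ∀ i < L, ‖q i‖ = 1) (t : ℝ) :
    ‖∑ i ∈ range L, p i * Complex.exp (2 * Real.pi * Complex.I * i * t)‖ ^ 2 ≤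
      2 * L + 2 * ∑ τ ∈ Icc 1 (L - 1), ‖acorr L p τ + acorr L q τ‖ := by
  simpa only [exp_two_pi_I_mul_natCast_mul] using
    sq_norm_sum_mul_pow_le hp hq (norm_exp_two_pi_I_mul t)

/-- for unimodular sequences `p, q` of length `L`, the instantaneous
envelope power of `p` is bounded by `2L + 2 Σ_{τ=1}^{L-1} |ρ_p(τ) + ρ_q(τ)|`, and hence
`PMEPR(p) ≤ 2 + (2/L) Σ_{τ=1}^{L-1} |ρ_p(τ) + ρ_q(τ)|`. -/
theorem stmt_7 (L : ℕ) (p q : ℕ → ℂ)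
    (hp : ∀ i < L, ‖p i‖ = 1) (hq : ∀ i < L, ‖q i‖ = 1) :
    (∀ t : ℝ,
      ‖∑ i ∈ Finset.range L,
          p i * Complex.exp (2 * Real.pi * Complex.I * (i : ℂ) * (t : ℂ))‖ ^ 2 ≤
        2 * L + 2 * ∑ τ ∈ Finset.Icc 1 (L - 1),
          ‖acorr L p (τ : ℤ) + acorr L q (τ : ℤ)‖) ∧
    pmepr L p ≤ 2 + (2 / L) * ∑ τ ∈ Finset.Icc 1 (L - 1),
      ‖acorr L p (τ : ℤ) + acorr L q (τ : ℤ)‖ := by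
  refine ⟨sq_norm_sum_mul_exp_le hp hq, ciSup_le fun t => ?_⟩
  rcases L.eq_zero_or_pos with rfl | hL
  · simp
  rw [div_le_iff₀ (by positivity)]
  refine (sq_norm_sum_mul_exp_le hp hq t).trans_eq ?_
  field_simp

end
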